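/- Let J ≥ 1, θ0, θ ∈ ℝ^d, x = (x_1,…,x_J) ∈ (ℝ^d)^J, and let h0 : (ℝ^d)^J → ℝ satisfy the weak MISC condition at x with respect to θ0. Then gᴶ(θ,h0)(x) ≤ gᴶ(θ0,h0)(x) and gᴶ(θ0,h0)(x) = |h0(x)|; that is, θ0 pointwise maximizes the multi-index ReLU-based maximum score function. -/
import Mathlib


open MeasureTheory
open scoped RealInnerProductSpace

/-- The "positive part" multi-index ReLU-based maximum score function
`gᴶ₊(θ,h)(x) = max(h(x) − min_j max(−⟪x_j,θ⟫,0), 0)`. -/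
noncomputable def gJplus {d J : ℕ} (θ : EuclideanSpace ℝ (Fin d))
    (h : (Fin J → EuclideanSpace ℝ (Fin d)) → ℝ)
    (x : Fin J → EuclideanSpace ℝ (Fin d)) : ℝ :=
  max (h x - ⨅ j : Fin J, max (-⟪x j, θ⟫) 0) 0

/-- The "negative part" multi-index ReLU-based maximum score function
`gᴶ₋(θ,h)(x) = max(−h(x) − min_j max(⟪x_j,θ⟫,0), 0)`. -/
noncomputable def gJminus {d J : ℕ} (θ : EuclideanSpace ℝ (Fin d))
    (h : (Fin J → EuclideanSpace ℝ (Fin d)) → ℝ)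
    (x : Fin J → EuclideanSpace ℝ (Fin d)) : ℝ :=
  max (-h x - ⨅ j : Fin J, max ⟪x j, θ⟫ 0) 0

/-- The multi-index ReLU-based maximum score function `gᴶ = gᴶ₊ + gᴶ₋`. -/
noncomputable def gJ {d J : ℕ} (θ : EuclideanSpace ℝ (Fin d))
    (h : (Fin J → EuclideanSpace ℝ (Fin d)) → ℝ)
    (x : Fin J → EuclideanSpace ℝ (Fin d)) : ℝ :=
  gJplus θ h x + gJminus θ h x

/-- `h0` satisfies the weak multi-index single-crossing (MISC) condition at
`x = (x_1,…,x_J)` with respect to `θ0`. -/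
def WeakMISC {d J : ℕ} (θ0 : EuclideanSpace ℝ (Fin d))
    (h0 : (Fin J → EuclideanSpace ℝ (Fin d)) → ℝ)
    (x : Fin J → EuclideanSpace ℝ (Fin d)) : Prop :=
  ((∀ j, 0 < ⟪x j, θ0⟫) → 0 ≤ h0 x) ∧ ((∀ j, ⟪x j, θ0⟫ < 0) → h0 x ≤ 0)

/-- under the weak MISC condition at `x`, the true direction `θ0`
pointwise maximizes the multi-index ReLU-based maximum score function, attaining `|h0(x)|`. -/
theorem misc_pointwise_max {d J : ℕ} (hJ : 1 ≤ J)
    (θ0 θ : EuclideanSpace ℝ (Fin d)) (x : Fin J → EuclideanSpace ℝ (Fin d))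
    (h0 : (Fin J → EuclideanSpace ℝ (Fin d)) → ℝ) (hmisc : WeakMISC θ0 h0 x) :
    gJ θ h0 x ≤ gJ θ0 h0 x ∧ gJ θ0 h0 x = |h0 x| := by
  haveI : Nonempty (Fin J) := Fin.pos_iff_nonempty.mp hJ
  have bdd : ∀ θ' : EuclideanSpace ℝ (Fin d),
      BddBelow (Set.range fun j : Fin J => max (-⟪x j, θ'⟫) 0) :=
    fun θ' => ⟨0, by rintro y ⟨j, rfl⟩; exact le_max_right _ _⟩
  have bdd' : ∀ θ' : EuclideanSpace ℝ (Fin d),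
      BddBelow (Set.range fun j : Fin J => max ⟪x j, θ'⟫ 0) :=
    fun θ' => ⟨0, by rintro y ⟨j, rfl⟩; exact le_max_right _ _⟩
  have hA : ∀ θ' : EuclideanSpace ℝ (Fin d),
      0 ≤ ⨅ j : Fin J, max (-⟪x j, θ'⟫) 0 :=
    fun θ' => le_ciInf fun j => le_max_right _ _
  have hB : ∀ θ' : EuclideanSpace ℝ (Fin d),
      0 ≤ ⨅ j : Fin J, max ⟪x j, θ'⟫ 0 :=
    fun θ' => le_ciInf fun j => le_max_right _ _
  have habs : |h0 x| = max (h0 x) 0 + max (-h0 x) 0 := by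
    rcases le_total 0 (h0 x) with h | h
    · rw [abs_of_nonneg h, max_eq_left h, max_eq_right (neg_nonpos.mpr h), add_zero]
    · rw [abs_of_nonpos h, max_eq_right h, max_eq_left (neg_nonneg.mpr h), zero_add]
  have hle : ∀ θ' : EuclideanSpace ℝ (Fin d), gJ θ' h0 x ≤ |h0 x| := by
    intro θ'
    rw [habs]
    unfold gJ gJplus gJminus
    exact add_le_add (max_le_max (by linarith [hA θ']) le_rfl)
      (max_le_max (by linarith [hB θ']) le_rfl)
  have key : gJ θ0 h0 x = |h0 x| := by
    by_cases hp : ∀ j, 0 < ⟪x j, θ0⟫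
    · have hh : 0 ≤ h0 x := hmisc.1 hp
      have hA0 : (⨅ j : Fin J, max (-⟪x j, θ0⟫) 0) = 0 := by
        refine le_antisymm ?_ (hA θ0)
        refine (ciInf_le (bdd θ0) (Classical.arbitrary (Fin J))).trans ?_
        exact le_of_eq (max_eq_right (neg_nonpos.mpr (hp _).le))
      have hBm : max (-h0 x - ⨅ j : Fin J, max ⟪x j, θ0⟫ 0) 0 = 0 :=
        max_eq_right (by linarith [hB θ0])
      unfold gJ gJplus gJminus
      rw [hA0, hBm, sub_zero, add_zero, max_eq_left hh, abs_of_nonneg hh]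
    · by_cases hn : ∀ j, ⟪x j, θ0⟫ < 0
      · have hh : h0 x ≤ 0 := hmisc.2 hn
        have hB0 : (⨅ j : Fin J, max ⟪x j, θ0⟫ 0) = 0 := by
          refine le_antisymm ?_ (hB θ0)
          refine (ciInf_le (bdd' θ0) (Classical.arbitrary (Fin J))).trans ?_
          exact le_of_eq (max_eq_right (hn _).le)
        have hAm : max (h0 x - ⨅ j : Fin J, max (-⟪x j, θ0⟫) 0) 0 = 0 :=
          max_eq_right (by linarith [hA θ0])
        unfold gJ gJplus gJminus
        rw [hB0, hAm, sub_zero, zero_add, max_eq_left (neg_nonneg.mpr hh),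
          abs_of_nonpos hh]
      · push_neg at hp hn
        obtain ⟨j1, h1⟩ := hp
        obtain ⟨j2, h2⟩ := hn
        have hA0 : (⨅ j : Fin J, max (-⟪x j, θ0⟫) 0) = 0 := by
          refine le_antisymm ?_ (hA θ0)
          refine (ciInf_le (bdd θ0) j2).trans ?_
          exact le_of_eq (max_eq_right (neg_nonpos.mpr h2))
        have hB0 : (⨅ j : Fin J, max ⟪x j, θ0⟫ 0) = 0 := by
          refine le_antisymm ?_ (hB θ0)
          refine (ciInf_le (bdd' θ0) j1).trans ?_
          exact le_of_eq (max_eq_right h1)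
        unfold gJ gJplus gJminus
        rw [hA0, hB0, sub_zero, sub_zero, habs]
  exact ⟨(hle θ).trans key.ge, key⟩
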